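/- With the setup of the robust closure model (q̇ = F̃(q) + μ_cl D q + μ_nl f̃(q) diag(d_{ii}) q, ‖F̃(q)‖ ≤ f̃(q), D symmetric negative definite, μ_cl, μ_nl > 0), if q ∈ ℝ^r satisfies ‖q‖ > -1/(μ_nl max_i d_{ii}) and f̃(q) > 0, then the right-hand side satisfies q*(F̃(q) + μ_cl D q + μ_nl f̃(q) diag(d_{ii}) q) < 0, i.e., the energy V(q) = ½‖q‖² is strictly decreasing outside a ball. -/

import Mathlib

open scoped RealInnerProductSpace

/-!
Write `M = max_i d_ii < 0`. By Cauchy–Schwarz `⟪q, F̃ q⟫ ≤ ‖q‖ f̃(q)`, negative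
definiteness gives `μ_cl ⟪q, D q⟫ ≤ 0`, and `⟪q, diag(d_ii) q⟫ = ∑ d_ii q_i² ≤ M ‖q‖²`.
Hence the inner product is at most `f̃(q) ‖q‖ (1 + μ_nl M ‖q‖)`, and the last factor is
negative exactly when `‖q‖ > -1 / (μ_nl M)`.
-/

section
variable {ι : Type*} [Fintype ι] [DecidableEq ι]

theorem Matrix.diag_neg_of_inner_toEuclideanLin_neg {D : Matrix ι ι ℝ}
    (hD : ∀ p : EuclideanSpace ℝ ι, p ≠ 0 → ⟪p, Matrix.toEuclideanLin D p⟫ < 0) (i : ι) :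
    D i i < 0 := by
  simpa [EuclideanSpace.inner_single_left, Matrix.toLpLin_apply, Matrix.mulVec_single] using
    hD (EuclideanSpace.single i 1) (by simp)

theorem Matrix.inner_toEuclideanLin_diagonal_le {d : ι → ℝ} {M : ℝ} (hd : ∀ i, d i ≤ M)
    (q : EuclideanSpace ℝ ι) :
    ⟪q, Matrix.toEuclideanLin (Matrix.diagonal d) q⟫ ≤ M * ‖q‖ ^ 2 := by
  rw [EuclideanSpace.norm_sq_eq, Finset.mul_sum, PiLp.inner_apply]
  refine Finset.sum_le_sum fun i _ => ?_
  simp only [Matrix.toLpLin_apply, Matrix.mulVec_diagonal, RCLike.inner_apply,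
    Real.ringHom_apply, Real.norm_eq_abs, sq_abs]
  nlinarith [hd i, mul_self_nonneg (q i)]

end

theorem one_add_mul_neg_of_neg_div_lt {c x : ℝ} (hc : c < 0) (hx : -1 / c < x) :
    1 + c * x < 0 := by
  rw [div_lt_iff_of_neg hc] at hx
  linarith

theorem energy_strictly_decreasing_outside_ball_general {r : ℕ} (hr : 0 < r)
    (D : Matrix (Fin r) (Fin r) ℝ)
    (hneg : ∀ p : EuclideanSpace ℝ (Fin r), p ≠ 0 → ⟪p, Matrix.toEuclideanLin D p⟫ < 0)
    (F : EuclideanSpace ℝ (Fin r) → EuclideanSpace ℝ (Fin r))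
    (f : EuclideanSpace ℝ (Fin r) → ℝ)
    (hF : ∀ p, ‖F p‖ ≤ f p)
    (μcl μnl : ℝ) (hμcl : 0 ≤ μcl) (hμnl : 0 < μnl)
    (q : EuclideanSpace ℝ (Fin r))
    (hq : ‖q‖ > -1 / (μnl * Finset.univ.sup' ⟨⟨0, hr⟩, Finset.mem_univ _⟩ fun i => D i i))
    (hfq : 0 < f q) :
    ⟪q, F q + μcl • Matrix.toEuclideanLin D q +
        (μnl * f q) • Matrix.toEuclideanLin (Matrix.diagonal fun i => D i i) q⟫ < 0 := by
  set M := Finset.univ.sup' ⟨⟨0, hr⟩, Finset.mem_univ _⟩ fun i => D i i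
  have hM : M < 0 :=
    (Finset.sup'_lt_iff _).2 fun i _ => Matrix.diag_neg_of_inner_toEuclideanLin_neg hneg i
  have hball : 1 + μnl * M * ‖q‖ < 0 :=
    one_add_mul_neg_of_neg_div_lt (mul_neg_of_pos_of_neg hμnl hM) hq
  have hqpos : 0 < ‖q‖ := (norm_nonneg q).lt_of_ne' fun h => by norm_num [h] at hball
  have hFq : ⟪q, F q⟫ ≤ ‖q‖ * f q :=
    (real_inner_le_norm _ _).trans (mul_le_mul_of_nonneg_left (hF q) (norm_nonneg q))
  have hDq : μcl * ⟪q, Matrix.toEuclideanLin D q⟫ ≤ 0 :=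
    mul_nonpos_of_nonneg_of_nonpos hμcl (hneg q (norm_pos_iff.mp hqpos)).le
  have hdM (i : Fin r) : D i i ≤ M := Finset.le_sup' (fun j => D j j) (Finset.mem_univ i)
  have hdiag : (μnl * f q) * ⟪q, Matrix.toEuclideanLin (Matrix.diagonal fun i => D i i) q⟫ ≤
      (μnl * f q) * (M * ‖q‖ ^ 2) :=
    mul_le_mul_of_nonneg_left (Matrix.inner_toEuclideanLin_diagonal_le hdM q) (by positivity)
  rw [inner_add_right, inner_add_right, real_inner_smul_right, real_inner_smul_right]
  calc _ ≤ ‖q‖ * f q + (μnl * f q) * (M * ‖q‖ ^ 2) := by linarith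
    _ = (f q * ‖q‖) * (1 + μnl * M * ‖q‖) := by ring
    _ < 0 := mul_neg_of_pos_of_neg (by positivity) hball

/-- for the robust closure model, if `‖q‖ > -1/(μ_nl max_i d_ii)` and
`f̃(q) > 0`, then `qᵀ(F̃(q) + μ_cl D q + μ_nl f̃(q) diag(d_ii) q) < 0`, i.e., the energy
`V(q) = ½‖q‖²` is strictly decreasing outside a ball. -/
theorem energy_strictly_decreasing_outside_ball {r : ℕ} (hr : 0 < r)
    (D : Matrix (Fin r) (Fin r) ℝ) (hherm : D.IsHermitian)
    (hneg : ∀ p : EuclideanSpace ℝ (Fin r), p ≠ 0 → ⟪p, Matrix.toEuclideanLin D p⟫ < 0)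
    (F : EuclideanSpace ℝ (Fin r) → EuclideanSpace ℝ (Fin r))
    (f : EuclideanSpace ℝ (Fin r) → ℝ)
    (hF : ∀ p, ‖F p‖ ≤ f p)
    (μcl μnl : ℝ) (hμcl : 0 ≤ μcl) (hμnl : 0 < μnl)
    (q : EuclideanSpace ℝ (Fin r))
    (hq : ‖q‖ > -1 / (μnl * Finset.univ.sup' ⟨⟨0, hr⟩, Finset.mem_univ _⟩ fun i => D i i))
    (hfq : 0 < f q) :
    ⟪q, F q + μcl • Matrix.toEuclideanLin D q +
        (μnl * f q) • Matrix.toEuclideanLin (Matrix.diagonal fun i => D i i) q⟫ < 0 :=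
  energy_strictly_decreasing_outside_ball_general hr D hneg F f hF μcl μnl hμcl hμnl q hq hfq
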